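/- For each n ≥ 0, the function G_n(x) = (−1)ⁿ e^{x²/2}(dⁿ/dxⁿ)(e^{−x²}) satisfies L G_n = −n·G_n, where L = (1/2)(d²/dx² + 1 − x²); moreover G_n ∈ L²(ℝ, dx). -/

import Mathlib

/-!
Rodrigues' formula `dⁿ/dxⁿ e^{-x²} = (-1)ⁿ Hₙ(x) e^{-x²}` gives `G_n = Hₙ(x) e^{-x²/2}`.
Differentiation maps `q(x) e^{b x²}` to `(q' + 2bxq)(x) e^{b x²}`, so `L G_n = -n G_n` reduces to
a polynomial identity, which is the Hermite equation `Hₙ'' = 2x Hₙ' - 2n Hₙ`. Square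
integrability holds because a polynomial times a Gaussian is integrable.
-/

open MeasureTheory Polynomial Real

noncomputable def physHermite : ℕ → ℝ[X]
  | 0 => 1
  | n + 1 => 2 * X * physHermite n - derivative (physHermite n)

theorem physHermite_ode (n : ℕ) :
    derivative (derivative (physHermite n))
      = 2 * X * derivative (physHermite n) - 2 * (n : ℝ[X]) * physHermite n := by
  induction n with
  | zero => simp [physHermite]
  | succ n ih =>
    have ih' := congrArg derivative ih
    simp only [derivative_sub, derivative_mul, derivative_X, derivative_natCast,
      derivative_ofNat, mul_one, zero_mul, mul_zero, zero_add, add_zero] at ih'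
    simp only [physHermite, derivative_add, derivative_sub, derivative_mul, derivative_X,
      derivative_ofNat, mul_one, zero_mul, zero_add, Nat.cast_succ]
    linear_combination 2 * X * ih - ih'

noncomputable def gaussianDeriv (b : ℝ) (q : ℝ[X]) : ℝ[X] :=
  derivative q + C (2 * b) * X * q

theorem hasDerivAt_eval_mul_exp_mul_sq (b : ℝ) (q : ℝ[X]) (x : ℝ) :
    HasDerivAt (fun t => q.eval t * exp (b * t ^ 2))
      ((gaussianDeriv b q).eval x * exp (b * x ^ 2)) x := by
  have hexp : HasDerivAt (fun t => exp (b * t ^ 2)) (exp (b * x ^ 2) * (b * (2 * x))) x := by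
    simpa using ((hasDerivAt_pow 2 x).const_mul b).exp
  refine ((q.hasDerivAt x).mul hexp).congr_deriv ?_
  simp only [gaussianDeriv, eval_add, eval_mul, eval_C, eval_X]
  ring

theorem deriv_eval_mul_exp_mul_sq (b : ℝ) (q : ℝ[X]) :
    deriv (fun t => q.eval t * exp (b * t ^ 2))
      = fun x => (gaussianDeriv b q).eval x * exp (b * x ^ 2) :=
  funext fun x => (hasDerivAt_eval_mul_exp_mul_sq b q x).deriv

theorem iteratedDeriv_exp_neg_sq (n : ℕ) :
    iteratedDeriv n (fun t => exp (-t ^ 2))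
      = fun x => (-1) ^ n * (physHermite n).eval x * exp (-x ^ 2) := by
  induction n with
  | zero => simp [physHermite]
  | succ n ih =>
    have hpoly : C ((-1) ^ (n + 1)) * physHermite (n + 1)
        = gaussianDeriv (-1) (C ((-1) ^ n) * physHermite n) := by
      simp only [physHermite, gaussianDeriv, derivative_C_mul, pow_succ, C_mul, C_neg, C_1, C_ofNat]
      norm_num
      ring
    have hcomb (m : ℕ) : (fun x => (-1) ^ m * (physHermite m).eval x * exp (-x ^ 2))
        = fun x => (C ((-1) ^ m) * physHermite m).eval x * exp (-1 * x ^ 2) :=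
      funext fun x => by simp
    rw [iteratedDeriv_succ, ih, hcomb, hcomb, hpoly, deriv_eval_mul_exp_mul_sq]

theorem gaussianDeriv_gaussianDeriv_physHermite (n : ℕ) :
    gaussianDeriv (-(1 / 2)) (gaussianDeriv (-(1 / 2)) (physHermite n))
      + (1 - X ^ 2) * physHermite n = -(2 * (n : ℝ[X])) * physHermite n := by
  have hC : C (2 * (-(1 / 2) : ℝ)) = -1 := by norm_num
  simp only [gaussianDeriv, hC, derivative_add, derivative_mul, derivative_neg, derivative_one,
    derivative_X]
  rw [physHermite_ode]
  ring

theorem integrable_eval_mul_exp_mul_sq (q : ℝ[X]) {b : ℝ} (hb : b < 0) :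
    Integrable (fun x => q.eval x * exp (b * x ^ 2)) := by
  have hmonomial (k : ℕ) : Integrable (fun x : ℝ => x ^ k * exp (b * x ^ 2)) := by
    simpa [rpow_natCast] using integrable_rpow_mul_exp_neg_mul_sq (neg_pos.2 hb) (s := k)
      (neg_one_lt_zero.trans_le k.cast_nonneg)
  simp_rw [eval_eq_sum_range, Finset.sum_mul, mul_assoc]
  exact integrable_finsetSum _ fun i _ => (hmonomial i).const_mul _

theorem memLp_two_eval_mul_exp_mul_sq (q : ℝ[X]) {b : ℝ} (hb : b < 0) :
    MemLp (fun x => q.eval x * exp (b * x ^ 2)) 2 := by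
  rw [memLp_two_iff_integrable_sq (by fun_prop)]
  convert integrable_eval_mul_exp_mul_sq (q * q) (mul_neg_of_pos_of_neg two_pos hb) using 2 with x
  rw [eval_mul, mul_pow, sq, sq, ← exp_add]
  ring_nf

/-- The Hermite function `G_n(x) = (−1)ⁿ e^{x²/2}(dⁿ/dxⁿ)(e^{−x²})` satisfies
`L G_n = −n G_n` for `L = (1/2)(d²/dx² + 1 − x²)`, and `G_n ∈ L²(ℝ, dx)`. -/
theorem hermite_oscillator_eigenfunction (n : ℕ) (G : ℝ → ℝ)
    (hG : G = fun x =>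
        (-1 : ℝ) ^ n * Real.exp (x ^ 2 / 2)
          * iteratedDeriv n (fun t => Real.exp (-t ^ 2)) x) :
    (∀ x, (1 / 2) * (deriv (deriv G) x + (1 - x ^ 2) * G x) = -(n : ℝ) * G x)
    ∧ MemLp G 2 (volume : Measure ℝ) := by
  have hG' : G = fun x => (physHermite n).eval x * exp (-(1 / 2) * x ^ 2) := by
    rw [hG, iteratedDeriv_exp_neg_sq]
    funext x
    have hsign : ((-1 : ℝ) ^ n) ^ 2 = 1 := by rw [← pow_mul, pow_mul', neg_one_sq, one_pow]
    have hexp : exp (x ^ 2 / 2) * exp (-x ^ 2) = exp (-(1 / 2) * x ^ 2) := by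
      rw [← exp_add]; ring_nf
    linear_combination (physHermite n).eval x * exp (-(1 / 2) * x ^ 2) * hsign
      + ((-1) ^ n) ^ 2 * (physHermite n).eval x * hexp
  subst hG'
  refine ⟨fun x => ?_, memLp_two_eval_mul_exp_mul_sq _ (by norm_num)⟩
  simp only [deriv_eval_mul_exp_mul_sq]
  have hpoly := congrArg (eval x) (gaussianDeriv_gaussianDeriv_physHermite n)
  simp only [eval_add, eval_mul, eval_sub, eval_neg, eval_one, eval_pow, eval_X, eval_ofNat,
    eval_natCast] at hpoly
  linear_combination (1 / 2) * exp (-(1 / 2) * x ^ 2) * hpoly
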